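/- Let f be a uniformly random Boolean function on F_2^n and l = 2^n. For all θ ≥ 0, P(|Δ(f) - E[Δ(f)]| ≥ θ) ≤ 2 exp(-θ²/(8l)). -/

import Mathlib

open Finset

def ac {n : ℕ} (f : (Fin n → ZMod 2) → ZMod 2) (u : Fin n → ZMod 2) : ℤ :=
  ∑ x : Fin n → ZMod 2, (-1 : ℤ) ^ ((f x + f (x + u)).val)

/-- The absolute indicator `Δ(f) = max_{u ≠ 0} |Δ_f(u)|`. -/
def absInd {n : ℕ} (f : (Fin n → ZMod 2) → ZMod 2) : ℕ :=
  Finset.sup (Finset.univ.erase 0) fun u => (ac f u).natAbs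

open scoped Classical in
noncomputable def pr (n : ℕ) (p : ((Fin n → ZMod 2) → ZMod 2) → Prop) : ℝ :=
  (Finset.univ.filter fun f => p f).card / Fintype.card ((Fin n → ZMod 2) → ZMod 2)

/-- Expectation of a real-valued function of a uniformly random Boolean function. -/
noncomputable def ev (n : ℕ) (X : ((Fin n → ZMod 2) → ZMod 2) → ℝ) : ℝ :=
  (∑ f : (Fin n → ZMod 2) → ZMod 2, X f) / Fintype.card ((Fin n → ZMod 2) → ZMod 2)

namespace Stmt12Aux

open scoped Classical

abbrev Pt (n : ℕ) := Fin n → ZMod 2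
abbrev BF (n : ℕ) := (Fin n → ZMod 2) → ZMod 2

variable {n : ℕ}

lemma pt_add_self (v : Pt n) : v + v = 0 := by
  funext i
  have h : ∀ a : ZMod 2, a + a = 0 := by decide
  exact h (v i)

/-! ### Bounded differences of `absInd` -/

lemma ac_update_diff (f : BF n) (y : Pt n) (a : ZMod 2) (u : Pt n) :
    |ac (Function.update f y a) u - ac f u| ≤ 4 := by
  set f' := Function.update f y a with hf'
  have hsum : ac f' u - ac f u
      = ∑ x ∈ ({y, y + u} : Finset (Pt n)),
          ((-1 : ℤ) ^ ((f' x + f' (x + u)).val) - (-1) ^ ((f x + f (x + u)).val)) := by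
    rw [ac, ac, ← Finset.sum_sub_distrib]
    refine (Finset.sum_subset (Finset.subset_univ _) ?_).symm
    intro x _ hx
    simp only [Finset.mem_insert, Finset.mem_singleton] at hx
    push_neg at hx
    have h1 : f' x = f x := Function.update_of_ne hx.1 _ _
    have h2 : f' (x + u) = f (x + u) := by
      refine Function.update_of_ne ?_ _ _
      intro h
      exact hx.2 (by rw [← h, add_assoc, pt_add_self, add_zero])
    rw [h1, h2, sub_self]
  have hterm : ∀ x : Pt n,
      |(-1 : ℤ) ^ ((f' x + f' (x + u)).val) - (-1) ^ ((f x + f (x + u)).val)| ≤ 2 := by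
    intro x
    have h1 : |(-1 : ℤ) ^ ((f' x + f' (x + u)).val)| = 1 := by
      rw [abs_pow, abs_neg, abs_one, one_pow]
    have h2 : |(-1 : ℤ) ^ ((f x + f (x + u)).val)| = 1 := by
      rw [abs_pow, abs_neg, abs_one, one_pow]
    calc |(-1 : ℤ) ^ ((f' x + f' (x + u)).val) - (-1) ^ ((f x + f (x + u)).val)|
        ≤ |(-1 : ℤ) ^ ((f' x + f' (x + u)).val)| + |(-1 : ℤ) ^ ((f x + f (x + u)).val)| :=
          abs_sub _ _
      _ ≤ 2 := by rw [h1, h2]; norm_num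
  have hcard : (({y, y + u} : Finset (Pt n)).card : ℤ) ≤ 2 := by
    exact_mod_cast (Finset.card_insert_le _ _).trans (by simp)
  calc |ac f' u - ac f u|
      = |∑ x ∈ ({y, y + u} : Finset (Pt n)),
          ((-1 : ℤ) ^ ((f' x + f' (x + u)).val) - (-1) ^ ((f x + f (x + u)).val))| := by
        rw [hsum]
    _ ≤ ∑ x ∈ ({y, y + u} : Finset (Pt n)),
          |(-1 : ℤ) ^ ((f' x + f' (x + u)).val) - (-1) ^ ((f x + f (x + u)).val)| :=
        Finset.abs_sum_le_sum_abs _ _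
    _ ≤ ∑ _x ∈ ({y, y + u} : Finset (Pt n)), (2 : ℤ) :=
        Finset.sum_le_sum fun x _ => hterm x
    _ = ({y, y + u} : Finset (Pt n)).card * 2 := by rw [Finset.sum_const, nsmul_eq_mul]
    _ ≤ 4 := by nlinarith [hcard]

lemma absInd_update_le (f : BF n) (y : Pt n) (a : ZMod 2) :
    absInd (Function.update f y a) ≤ absInd f + 4 := by
  apply Finset.sup_le
  intro u hu
  have h := ac_update_diff f y a u
  rw [abs_le] at h
  have h2 : (ac f u).natAbs ≤ absInd f :=
    Finset.le_sup (f := fun u => (ac f u).natAbs) hu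
  omega

lemma absInd_update_bdd (f : BF n) (y : Pt n) (a : ZMod 2) :
    |((absInd (Function.update f y a) : ℝ)) - (absInd f : ℝ)| ≤ 4 := by
  have h1 := absInd_update_le f y a
  have h2 : absInd f ≤ absInd (Function.update f y a) + 4 := by
    have h := absInd_update_le (Function.update f y a) y (f y)
    rwa [Function.update_idem, Function.update_eq_self] at h
  rw [abs_sub_le_iff]
  constructor
  · have : (absInd (Function.update f y a) : ℝ) ≤ (absInd f : ℝ) + 4 := by exact_mod_cast h1
    linarith
  · have : (absInd f : ℝ) ≤ (absInd (Function.update f y a) : ℝ) + 4 := by exact_mod_cast h2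
    linarith

/-! ### Agreement sets -/

noncomputable def agr (s : Finset (Pt n)) (f : BF n) : Finset (BF n) :=
  Finset.univ.filter fun g => ∀ x ∈ s, g x = f x

lemma mem_agr {s : Finset (Pt n)} {f g : BF n} : g ∈ agr s f ↔ ∀ x ∈ s, g x = f x := by
  simp [agr]

lemma agr_empty (f : BF n) : agr (∅ : Finset (Pt n)) f = Finset.univ := by
  ext g; simp [mem_agr]

lemma agr_univ (f : BF n) : agr (Finset.univ : Finset (Pt n)) f = {f} := by
  ext g
  simp only [mem_agr, Finset.mem_singleton]
  constructor
  · intro h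
    funext x
    exact h x (Finset.mem_univ x)
  · intro h x _
    rw [h]

lemma agr_update {s : Finset (Pt n)} {x : Pt n} (hx : x ∉ s) (f : BF n) (a : ZMod 2) :
    agr s (Function.update f x a) = agr s f := by
  ext g
  simp only [mem_agr]
  constructor <;> intro h y hy <;>
    have hyx : y ≠ x := fun e => hx (e ▸ hy)
  · have := h y hy
    rwa [Function.update_of_ne hyx] at this
  · rw [Function.update_of_ne hyx]
    exact h y hy

lemma update_mem_agr {s : Finset (Pt n)} {x : Pt n} (hx : x ∉ s) {f g : BF n} (a : ZMod 2)
    (hg : g ∈ agr s f) : Function.update g x a ∈ agr s f := by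
  rw [mem_agr] at hg ⊢
  intro y hy
  have hyx : y ≠ x := fun e => hx (e ▸ hy)
  rw [Function.update_of_ne hyx]
  exact hg y hy

lemma mem_agr_insert {s : Finset (Pt n)} {x : Pt n} (hx : x ∉ s) {f g : BF n} {a : ZMod 2} :
    g ∈ agr (insert x s) (Function.update f x a) ↔ g ∈ agr s f ∧ g x = a := by
  simp only [mem_agr, Finset.mem_insert]
  constructor
  · intro h
    refine ⟨fun y hy => ?_, ?_⟩
    · have hyx : y ≠ x := fun e => hx (e ▸ hy)
      have := h y (Or.inr hy)
      rwa [Function.update_of_ne hyx] at this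
    · have := h x (Or.inl rfl)
      rwa [Function.update_self] at this
  · rintro ⟨h1, h2⟩ y hy
    rcases hy with hy | hy
    · subst hy; rw [Function.update_self]; exact h2
    · have hyx : y ≠ x := fun e => hx (e ▸ hy)
      rw [Function.update_of_ne hyx]
      exact h1 y hy

lemma agr_insert_split {s : Finset (Pt n)} {x : Pt n} (hx : x ∉ s) (f : BF n) :
    agr s f
      = agr (insert x s) (Function.update f x 0) ∪ agr (insert x s) (Function.update f x 1) := by
  ext g
  simp only [Finset.mem_union, mem_agr_insert hx]
  have hgx : g x = 0 ∨ g x = 1 := by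
    have : ∀ b : ZMod 2, b = 0 ∨ b = 1 := by decide
    exact this (g x)
  tauto

lemma agr_insert_disjoint {s : Finset (Pt n)} {x : Pt n} (hx : x ∉ s) (f : BF n) :
    Disjoint (agr (insert x s) (Function.update f x 0))
      (agr (insert x s) (Function.update f x 1)) := by
  rw [Finset.disjoint_left]
  intro g h0 h1
  have e0 := (mem_agr_insert hx).1 h0
  have e1 := (mem_agr_insert hx).1 h1
  rw [e0.2] at e1
  exact absurd e1.2 (by decide)

lemma sum_agr_flip {s : Finset (Pt n)} {x : Pt n} (hx : x ∉ s) (f : BF n) (F : BF n → ℝ)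
    (a b : ZMod 2) :
    ∑ g ∈ agr (insert x s) (Function.update f x b), F g
      = ∑ g ∈ agr (insert x s) (Function.update f x a), F (Function.update g x b) := by
  refine Finset.sum_nbij' (fun g => Function.update g x a) (fun g => Function.update g x b)
    ?_ ?_ ?_ ?_ ?_
  · intro g hg
    obtain ⟨hg1, _⟩ := (mem_agr_insert hx).1 hg
    exact (mem_agr_insert hx).2 ⟨update_mem_agr hx a hg1, Function.update_self _ _ _⟩
  · intro g hg
    obtain ⟨hg1, _⟩ := (mem_agr_insert hx).1 hg
    exact (mem_agr_insert hx).2 ⟨update_mem_agr hx b hg1, Function.update_self _ _ _⟩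
  · intro g hg
    obtain ⟨_, hg2⟩ := (mem_agr_insert hx).1 hg
    show Function.update (Function.update g x a) x b = g
    rw [Function.update_idem, ← hg2, Function.update_eq_self]
  · intro g hg
    obtain ⟨_, hg2⟩ := (mem_agr_insert hx).1 hg
    show Function.update (Function.update g x b) x a = g
    rw [Function.update_idem, ← hg2, Function.update_eq_self]
  · intro g hg
    obtain ⟨_, hg2⟩ := (mem_agr_insert hx).1 hg
    show F g = F (Function.update (Function.update g x a) x b)
    rw [Function.update_idem, ← hg2, Function.update_eq_self]

lemma card_agr_flip {s : Finset (Pt n)} {x : Pt n} (hx : x ∉ s) (f : BF n) (a b : ZMod 2) :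
    (agr (insert x s) (Function.update f x a)).card
      = (agr (insert x s) (Function.update f x b)).card := by
  have h := sum_agr_flip hx f (fun _ => (1 : ℝ)) a b
  simp only [Finset.sum_const, nsmul_eq_mul, mul_one] at h
  exact_mod_cast h.symm

lemma card_agr (s : Finset (Pt n)) (f : BF n) :
    (agr s f).card * 2 ^ s.card = Fintype.card (BF n) := by
  induction s using Finset.induction_on generalizing f with
  | empty => simp [agr_empty]
  | @insert x s hx ih =>
    have hsplit : (agr s f).card
        = (agr (insert x s) (Function.update f x 0)).card
          + (agr (insert x s) (Function.update f x 1)).card := by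
      rw [agr_insert_split hx f, Finset.card_union_of_disjoint (agr_insert_disjoint hx f)]
    have hfx : f x = 0 ∨ f x = 1 := by
      have : ∀ b : ZMod 2, b = 0 ∨ b = 1 := by decide
      exact this (f x)
    have hf0 : (agr (insert x s) f).card = (agr (insert x s) (Function.update f x 0)).card := by
      rcases hfx with h | h
      · conv_lhs => rw [← Function.update_eq_self x f, h]
      · conv_lhs => rw [← Function.update_eq_self x f, h]
        exact card_agr_flip hx f 1 0
    have h2 : (agr (insert x s) f).card * 2 = (agr s f).card := by
      rw [hsplit, hf0, card_agr_flip (a := (0 : ZMod 2)) (b := (1 : ZMod 2)) hx f]; ring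
    calc (agr (insert x s) f).card * 2 ^ (insert x s).card
        = ((agr (insert x s) f).card * 2) * 2 ^ s.card := by
          rw [Finset.card_insert_of_notMem hx, pow_succ]; ring
      _ = (agr s f).card * 2 ^ s.card := by rw [h2]
      _ = Fintype.card (BF n) := ih f

lemma card_agr_pos (s : Finset (Pt n)) (f : BF n) : 0 < (agr s f).card := by
  have h := card_agr s f
  have hC : 0 < Fintype.card (BF n) := Fintype.card_pos
  rcases Nat.eq_zero_or_pos (agr s f).card with h0 | h0
  · rw [h0, zero_mul] at h; omega
  · exact h0

/-! ### Conditional averages -/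

/-- Conditional expectation of `F` given the values of `f` on `s`. -/
noncomputable def condAvg (F : BF n → ℝ) (s : Finset (Pt n)) (f : BF n) : ℝ :=
  (∑ g ∈ agr s f, F g) / (agr s f).card

lemma condAvg_empty (F : BF n → ℝ) (f : BF n) : condAvg F ∅ f = ev n F := by
  rw [condAvg, ev, agr_empty, Finset.card_univ]

lemma condAvg_univ (F : BF n → ℝ) (f : BF n) : condAvg F Finset.univ f = F f := by
  rw [condAvg, agr_univ]
  simp

lemma card_agr_insert_half {s : Finset (Pt n)} {x : Pt n} (hx : x ∉ s) (f : BF n) (a : ZMod 2) :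
    ((agr (insert x s) (Function.update f x a)).card : ℝ) * 2 = (agr s f).card := by
  have hsplit : (agr s f).card
      = (agr (insert x s) (Function.update f x 0)).card
        + (agr (insert x s) (Function.update f x 1)).card := by
    rw [agr_insert_split hx f, Finset.card_union_of_disjoint (agr_insert_disjoint hx f)]
  have h01 := card_agr_flip (a := a) (b := (0 : ZMod 2)) hx f
  have h11 := card_agr_flip (a := a) (b := (1 : ZMod 2)) hx f
  rw [hsplit, ← h01, ← h11]
  push_cast
  ring

lemma condAvg_rec {s : Finset (Pt n)} {x : Pt n} (hx : x ∉ s) (F : BF n → ℝ) (f : BF n) :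
    condAvg F s f
      = (condAvg F (insert x s) (Function.update f x 0)
          + condAvg F (insert x s) (Function.update f x 1)) / 2 := by
  have hsum : ∑ g ∈ agr s f, F g
      = (∑ g ∈ agr (insert x s) (Function.update f x 0), F g)
        + ∑ g ∈ agr (insert x s) (Function.update f x 1), F g := by
    rw [agr_insert_split hx f, Finset.sum_union (agr_insert_disjoint hx f)]
  have hc0 := card_agr_insert_half hx f 0
  have hm0 : (0 : ℝ) < (agr (insert x s) (Function.update f x 0)).card := by
    exact_mod_cast card_agr_pos _ _
  have hm1 : (0 : ℝ) < (agr (insert x s) (Function.update f x 1)).card := by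
    exact_mod_cast card_agr_pos _ _
  have hmeq : ((agr (insert x s) (Function.update f x 0)).card : ℝ)
      = (agr (insert x s) (Function.update f x 1)).card := by
    exact_mod_cast card_agr_flip (a := (0 : ZMod 2)) (b := (1 : ZMod 2)) hx f
  rw [condAvg, condAvg, condAvg, hsum, ← hc0, ← hmeq]
  field_simp
  try ring

lemma condAvg_pair_bdd {s : Finset (Pt n)} {x : Pt n} (hx : x ∉ s) {F : BF n → ℝ}
    (hF : ∀ f y a, |F (Function.update f y a) - F f| ≤ 4) (f : BF n) :
    |condAvg F (insert x s) (Function.update f x 0)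
      - condAvg F (insert x s) (Function.update f x 1)| ≤ 4 := by
  have hflip := sum_agr_flip hx f F 0 1
  have hmeq : ((agr (insert x s) (Function.update f x 1)).card : ℝ)
      = (agr (insert x s) (Function.update f x 0)).card := by
    exact_mod_cast card_agr_flip (a := (1 : ZMod 2)) (b := (0 : ZMod 2)) hx f
  have hm0 : (0 : ℝ) < (agr (insert x s) (Function.update f x 0)).card := by
    exact_mod_cast card_agr_pos _ _
  rw [condAvg, condAvg, hflip, hmeq, div_sub_div_same, ← Finset.sum_sub_distrib,
    abs_div, abs_of_pos hm0, div_le_iff₀ hm0]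
  calc |∑ g ∈ agr (insert x s) (Function.update f x 0), (F g - F (Function.update g x 1))|
      ≤ ∑ g ∈ agr (insert x s) (Function.update f x 0), |F g - F (Function.update g x 1)| :=
        Finset.abs_sum_le_sum_abs _ _
    _ ≤ ∑ _g ∈ agr (insert x s) (Function.update f x 0), (4 : ℝ) := by
        refine Finset.sum_le_sum fun g _ => ?_
        rw [abs_sub_comm]
        exact hF g x 1
    _ = 4 * (agr (insert x s) (Function.update f x 0)).card := by
        rw [Finset.sum_const, nsmul_eq_mul]; ring

/-! ### Pairing sum lemma -/

lemma pair_sum (h : BF n → ℝ) (x : Pt n) :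
    ∑ f : BF n, (h (Function.update f x 0) + h (Function.update f x 1))
      = 2 * ∑ f : BF n, h f := by
  have hinv : Function.Involutive (fun f : BF n => Function.update f x (f x + 1)) := by
    intro f
    funext y
    by_cases hy : y = x
    · subst hy
      simp only [Function.update_idem, Function.update_self]
      generalize f y = b
      revert b
      decide
    · simp [Function.update_of_ne hy]
  have flip_sum : ∑ f : BF n, h (Function.update f x (f x + 1)) = ∑ f : BF n, h f :=
    Equiv.sum_comp (hinv.toPerm _) h
  have step : ∀ f : BF n,
      h (Function.update f x 0) + h (Function.update f x 1)
        = h f + h (Function.update f x (f x + 1)) := by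
    intro f
    have hfx : f x = 0 ∨ f x = 1 := by
      have : ∀ b : ZMod 2, b = 0 ∨ b = 1 := by decide
      exact this (f x)
    rcases hfx with hb | hb
    · have e1 : Function.update f x 0 = f := by rw [← hb, Function.update_eq_self]
      have e2 : Function.update f x (f x + 1) = Function.update f x 1 := by
        rw [hb]
        try congr 1
        try decide
      rw [e1, e2]
    · have e1 : Function.update f x 1 = f := by rw [← hb, Function.update_eq_self]
      have e2 : Function.update f x (f x + 1) = Function.update f x 0 := by
        rw [hb]
        try congr 1
        try decide
      rw [e1, e2]
      try ring
  calc ∑ f : BF n, (h (Function.update f x 0) + h (Function.update f x 1))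
      = ∑ f : BF n, (h f + h (Function.update f x (f x + 1))) :=
        Finset.sum_congr rfl fun f _ => step f
    _ = (∑ f : BF n, h f) + ∑ f : BF n, h (Function.update f x (f x + 1)) :=
        Finset.sum_add_distrib
    _ = 2 * ∑ f : BF n, h f := by rw [flip_sum]; ring

/-! ### The MGF bound -/

lemma mgf_le (F : BF n → ℝ) (hF : ∀ f y a, |F (Function.update f y a) - F f| ≤ 4) (t : ℝ)
    (s : Finset (Pt n)) :
    ∑ f : BF n, Real.exp (t * (condAvg F s f - ev n F))
      ≤ (Fintype.card (BF n)) * Real.exp (2 * t ^ 2 * s.card) := by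
  induction s using Finset.induction_on with
  | empty =>
    simp only [condAvg_empty, sub_self, mul_zero, Real.exp_zero, Finset.sum_const,
      Finset.card_univ, nsmul_eq_mul, mul_one, Finset.card_empty, Nat.cast_zero]
    exact le_rfl
  | @insert x s hx ih =>
    have key : ∀ f : BF n,
        Real.exp (t * (condAvg F (insert x s) (Function.update f x 0) - ev n F))
          + Real.exp (t * (condAvg F (insert x s) (Function.update f x 1) - ev n F))
        ≤ Real.exp (t * (condAvg F s f - ev n F)) * (2 * Real.exp (2 * t ^ 2)) := by
      intro f
      set b0 := condAvg F (insert x s) (Function.update f x 0) with hb0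
      set b1 := condAvg F (insert x s) (Function.update f x 1) with hb1
      have hrec : condAvg F s f = (b0 + b1) / 2 := condAvg_rec hx F f
      have hd : |b0 - b1| ≤ 4 := condAvg_pair_bdd hx hF f
      set d := t * (b0 - b1) / 2 with hdd
      have e0 : t * (b0 - ev n F) = t * (condAvg F s f - ev n F) + d := by
        rw [hrec, hdd]; ring
      have e1 : t * (b1 - ev n F) = t * (condAvg F s f - ev n F) + -d := by
        rw [hrec, hdd]; ring
      rw [e0, e1, Real.exp_add, Real.exp_add, ← mul_add]
      have hcosh : Real.exp d + Real.exp (-d) = 2 * Real.cosh d := by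
        rw [Real.cosh_eq]; ring
      rw [hcosh]
      have hsq : (b0 - b1) ^ 2 ≤ 16 := by nlinarith [abs_le.1 hd]
      have hc2 : d ^ 2 / 2 ≤ 2 * t ^ 2 := by
        have hmul : t ^ 2 * (b0 - b1) ^ 2 ≤ t ^ 2 * 16 :=
          mul_le_mul_of_nonneg_left hsq (sq_nonneg t)
        rw [hdd]
        nlinarith [hmul]
      have hcexp : Real.cosh d ≤ Real.exp (2 * t ^ 2) :=
        (Real.cosh_le_exp_half_sq d).trans (Real.exp_le_exp.2 hc2)
      have hpos : 0 < Real.exp (t * (condAvg F s f - ev n F)) := Real.exp_pos _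
      nlinarith [hcexp, hpos, Real.cosh_pos (x := d)]
    have hps := pair_sum (fun f => Real.exp (t * (condAvg F (insert x s) f - ev n F))) x
    have hstep : 2 * ∑ f : BF n, Real.exp (t * (condAvg F (insert x s) f - ev n F))
        ≤ (2 * Real.exp (2 * t ^ 2))
            * ∑ f : BF n, Real.exp (t * (condAvg F s f - ev n F)) := by
      rw [← hps]
      calc ∑ f : BF n,
            (Real.exp (t * (condAvg F (insert x s) (Function.update f x 0) - ev n F))
              + Real.exp (t * (condAvg F (insert x s) (Function.update f x 1) - ev n F)))
          ≤ ∑ f : BF n,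
              Real.exp (t * (condAvg F s f - ev n F)) * (2 * Real.exp (2 * t ^ 2)) :=
            Finset.sum_le_sum fun f _ => key f
        _ = (2 * Real.exp (2 * t ^ 2))
              * ∑ f : BF n, Real.exp (t * (condAvg F s f - ev n F)) := by
            rw [← Finset.sum_mul]; ring
    have hfinal : ∑ f : BF n, Real.exp (t * (condAvg F (insert x s) f - ev n F))
        ≤ Real.exp (2 * t ^ 2) * ∑ f : BF n, Real.exp (t * (condAvg F s f - ev n F)) := by
      nlinarith [hstep]
    have hlast : Real.exp (2 * t ^ 2)
          * ((Fintype.card (BF n)) * Real.exp (2 * t ^ 2 * s.card))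
        = (Fintype.card (BF n)) * Real.exp (2 * t ^ 2 * (insert x s).card) := by
      have harr : Real.exp (2 * t ^ 2) * ((Fintype.card (BF n)) * Real.exp (2 * t ^ 2 * s.card))
          = (Fintype.card (BF n)) * (Real.exp (2 * t ^ 2) * Real.exp (2 * t ^ 2 * s.card)) := by
        ring
      rw [harr, ← Real.exp_add, Finset.card_insert_of_notMem hx]
      congr 2
      push_cast
      ring
    calc ∑ f : BF n, Real.exp (t * (condAvg F (insert x s) f - ev n F))
        ≤ Real.exp (2 * t ^ 2) * ∑ f : BF n, Real.exp (t * (condAvg F s f - ev n F)) := hfinal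
      _ ≤ Real.exp (2 * t ^ 2)
            * ((Fintype.card (BF n)) * Real.exp (2 * t ^ 2 * s.card)) := by
          have he := Real.exp_pos (2 * t ^ 2)
          nlinarith [ih]
      _ = (Fintype.card (BF n)) * Real.exp (2 * t ^ 2 * (insert x s).card) := hlast

/-! ### Chernoff tail bound -/

lemma card_pt : Fintype.card (Pt n) = 2 ^ n := by
  simp [Fintype.card_fun]

lemma tail_bound (F : BF n → ℝ) (hF : ∀ f y a, |F (Function.update f y a) - F f| ≤ 4)
    (t θ : ℝ) (ht : 0 ≤ t) :
    pr n (fun f => θ ≤ F f - ev n F)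
      ≤ Real.exp (2 * t ^ 2 * 2 ^ n - t * θ) := by
  have hC : (0 : ℝ) < (Fintype.card (BF n) : ℝ) := by exact_mod_cast Fintype.card_pos
  have hmgf := mgf_le F hF t Finset.univ
  rw [Finset.card_univ, card_pt] at hmgf
  simp only [condAvg_univ] at hmgf
  push_cast at hmgf
  have h1 : ∀ (D : DecidablePred fun f : BF n => θ ≤ F f - ev n F),
      ((@Finset.filter (BF n) (fun f => θ ≤ F f - ev n F) D Finset.univ).card : ℝ)
        * Real.exp (t * θ)
      ≤ (Fintype.card (BF n)) * Real.exp (2 * t ^ 2 * 2 ^ n) := by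
    intro D
    calc ((@Finset.filter (BF n) (fun f => θ ≤ F f - ev n F) D Finset.univ).card : ℝ)
          * Real.exp (t * θ)
        = ∑ _f ∈ @Finset.filter (BF n) (fun f => θ ≤ F f - ev n F) D Finset.univ,
            Real.exp (t * θ) := by
          rw [Finset.sum_const, nsmul_eq_mul]
      _ ≤ ∑ f ∈ @Finset.filter (BF n) (fun f => θ ≤ F f - ev n F) D Finset.univ,
            Real.exp (t * (F f - ev n F)) := by
          refine Finset.sum_le_sum fun f hf => ?_
          have hf' : θ ≤ F f - ev n F := (Finset.mem_filter.1 hf).2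
          exact Real.exp_le_exp.2 (mul_le_mul_of_nonneg_left hf' ht)
      _ ≤ ∑ f : BF n, Real.exp (t * (F f - ev n F)) :=
          Finset.sum_le_sum_of_subset_of_nonneg (Finset.filter_subset _ _)
            (fun f _ _ => (Real.exp_pos _).le)
      _ ≤ (Fintype.card (BF n)) * Real.exp (2 * t ^ 2 * 2 ^ n) := hmgf
  unfold pr
  rw [div_le_iff₀ hC]
  have hexp : (0 : ℝ) < Real.exp (t * θ) := Real.exp_pos _
  rw [show Real.exp (2 * t ^ 2 * 2 ^ n - t * θ)
      = Real.exp (2 * t ^ 2 * 2 ^ n) / Real.exp (t * θ) by rw [Real.exp_sub]]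
  rw [div_mul_eq_mul_div, le_div_iff₀ hexp]
  calc (Finset.filter (fun f : BF n => θ ≤ F f - ev n F) Finset.univ).card
        * Real.exp (t * θ)
      ≤ (Fintype.card (BF n)) * Real.exp (2 * t ^ 2 * 2 ^ n) := h1 _
    _ = Real.exp (2 * t ^ 2 * 2 ^ n) * (Fintype.card (BF n)) := by ring

lemma ev_neg (F : BF n → ℝ) : ev n (fun f => -F f) = -ev n F := by
  rw [ev, ev, Finset.sum_neg_distrib, neg_div]

lemma pr_congr {p q : BF n → Prop} (h : ∀ f, p f ↔ q f) : pr n p = pr n q := by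
  have : p = q := funext fun f => propext (h f)
  rw [this]

lemma pr_union (p q r : BF n → Prop) (h : ∀ f, p f → q f ∨ r f) :
    pr n p ≤ pr n q + pr n r := by
  unfold pr
  rw [← add_div]
  have hC : (0 : ℝ) < (Fintype.card (BF n) : ℝ) := by exact_mod_cast Fintype.card_pos
  have hcard : ((Finset.univ.filter fun f : BF n => p f).card : ℝ)
      ≤ ((Finset.univ.filter fun f : BF n => q f).card : ℝ)
        + ((Finset.univ.filter fun f : BF n => r f).card : ℝ) := by
    have hsub : (Finset.univ.filter fun f : BF n => p f)
        ⊆ (Finset.univ.filter fun f : BF n => q f) ∪ (Finset.univ.filter fun f : BF n => r f) := by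
      intro f hf
      simp only [Finset.mem_filter, Finset.mem_union, Finset.mem_univ, true_and] at *
      exact h f hf
    calc ((Finset.univ.filter fun f : BF n => p f).card : ℝ)
        ≤ (((Finset.univ.filter fun f : BF n => q f)
            ∪ (Finset.univ.filter fun f : BF n => r f)).card : ℝ) := by
          exact_mod_cast Finset.card_le_card hsub
      _ ≤ _ := by exact_mod_cast Finset.card_union_le _ _
  gcongr

/-! ### McDiarmid's inequality for this setting -/

lemma main (F : BF n → ℝ) (hF : ∀ f y a, |F (Function.update f y a) - F f| ≤ 4)
    (θ : ℝ) (hθ : 0 ≤ θ) :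
    pr n (fun f => θ ≤ |F f - ev n F|) ≤ 2 * Real.exp (-θ ^ 2 / (8 * 2 ^ n)) := by
  have hFneg : ∀ (f : BF n) y a,
      |(fun f => -F f) (Function.update f y a) - (fun f => -F f) f| ≤ 4 := by
    intro f y a
    simp only
    rw [← abs_neg]
    have harr : -(-F (Function.update f y a) - -F f) = F (Function.update f y a) - F f := by
      ring
    rw [harr]
    exact hF f y a
  have hLpos : (0 : ℝ) < (2 : ℝ) ^ n := by positivity
  set t : ℝ := θ / (4 * (2 : ℝ) ^ n) with ht
  have htnn : 0 ≤ t := by positivity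
  have hexp : 2 * t ^ 2 * 2 ^ n - t * θ = -θ ^ 2 / (8 * 2 ^ n) := by
    rw [ht]
    field_simp
    ring
  have h1 : pr n (fun f => θ ≤ F f - ev n F) ≤ Real.exp (-θ ^ 2 / (8 * 2 ^ n)) := by
    rw [← hexp]
    exact tail_bound F hF t θ htnn
  have h2 : pr n (fun f => θ ≤ ev n F - F f) ≤ Real.exp (-θ ^ 2 / (8 * 2 ^ n)) := by
    rw [← hexp]
    have htb := tail_bound (fun f => -F f) hFneg t θ htnn
    have heq : pr n (fun f => θ ≤ ev n F - F f)
        = pr n (fun f => θ ≤ (fun f => -F f) f - ev n (fun f => -F f)) := by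
      refine pr_congr fun f => ?_
      rw [ev_neg]
      simp only
      constructor <;> intro <;> linarith
    rw [heq]
    exact htb
  have hsplit : pr n (fun f => θ ≤ |F f - ev n F|)
      ≤ pr n (fun f => θ ≤ F f - ev n F) + pr n (fun f => θ ≤ ev n F - F f) := by
    refine pr_union _ _ _ fun f hf => ?_
    rcases abs_cases (F f - ev n F) with ⟨he, _⟩ | ⟨he, _⟩
    · left; rwa [he] at hf
    · right; rw [he] at hf; linarith
  calc pr n (fun f => θ ≤ |F f - ev n F|)
      ≤ pr n (fun f => θ ≤ F f - ev n F) + pr n (fun f => θ ≤ ev n F - F f) := hsplit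
    _ ≤ Real.exp (-θ ^ 2 / (8 * 2 ^ n)) + Real.exp (-θ ^ 2 / (8 * 2 ^ n)) :=
        add_le_add h1 h2
    _ = 2 * Real.exp (-θ ^ 2 / (8 * 2 ^ n)) := by ring

end Stmt12Aux

theorem stmt12 (n : ℕ) (θ : ℝ) (hθ : 0 ≤ θ) :
    (pr n fun f => θ ≤ |(absInd f : ℝ) - ev n (fun g => (absInd g : ℝ))|)
      ≤ 2 * Real.exp (-θ ^ 2 / (8 * 2 ^ n)) := by
  exact Stmt12Aux.main (fun f => (absInd f : ℝ))
    (fun f y a => Stmt12Aux.absInd_update_bdd f y a) θ hθ
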